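/- arXiv:alg-geom/9407003 — 4 statements merged into one kernel-verified Lean document; each statement's English description precedes it below -/
import Mathlib

section
/- Let n ≥ 1. Every symmetric polynomial P ∈ ℚ[x_1,...,x_n] that is invariant under the simultaneous shift x_i ↦ x_i + d for all d ∈ ℚ can be written as a polynomial in z_2,...,z_n, where z_k is the k-th elementary symmetric polynomial in y_1,...,y_n and y_i = n·x_i − Σ_j x_j. -/
/-!
Shift invariance under every rational `d` upgrades, by counting roots of `t ↦ P(x + t) - P(x)`,
to invariance under the shift by the polynomial `-(∑ j, x_j) / n`, which sends `x_i` to `y_i / n`.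
Hence `P(x) = P(y / n)`. Writing `P = F(e_1, …, e_n)` by the fundamental theorem of symmetric
polynomials gives `P = F(n⁻¹ z_1, …, n⁻ⁿ z_n)`, and `z_1 = ∑ i, y_i = 0`.
-/

open MvPolynomial

namespace MvPolynomial

section Shift

variable {σ R : Type*}

theorem eval_aeval_C_add_X [CommSemiring R] (P a : MvPolynomial σ R) :
    (aeval (fun j => Polynomial.C (X j) + Polynomial.X) P).eval a = aeval (fun j => X j + a) P := by
  have h : (Polynomial.evalRingHom a).comp
      (aeval fun j => Polynomial.C (X j) + Polynomial.X : MvPolynomial σ R →ₐ[R] _).toRingHom =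
      (aeval fun j => X j + a : MvPolynomial σ R →ₐ[R] _).toRingHom := by
    ext <;> simp
  exact RingHom.congr_fun h P

theorem aeval_X_add_eq_self_of_forall_C [CommRing R] [IsDomain R] [Infinite R]
    {P : MvPolynomial σ R} (h : ∀ d : R, aeval (fun j => X j + C d) P = P) (a : MvPolynomial σ R) :
    aeval (fun j => X j + a) P = P := by
  set Φ : MvPolynomial σ R →ₐ[R] Polynomial (MvPolynomial σ R) :=
    aeval fun j => Polynomial.C (X j) + Polynomial.X
  suffices hΦ : Φ P - Polynomial.C P = 0 by
    have := congrArg (Polynomial.eval a) hΦ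
    rwa [Polynomial.eval_sub, eval_aeval_C_add_X, Polynomial.eval_C, Polynomial.eval_zero,
      sub_eq_zero] at this
  refine Polynomial.eq_zero_of_infinite_isRoot _ ((Set.infinite_range_of_injective
    (C_injective σ R)).mono ?_)
  rintro _ ⟨d, rfl⟩
  rw [Set.mem_ofPred_eq, Polynomial.IsRoot, Polynomial.eval_sub, eval_aeval_C_add_X, h d,
    Polynomial.eval_C, sub_self]

end Shift

section Esymm

variable {σ R A : Type*} [Fintype σ] [CommSemiring A]

theorem IsSymmetric.aeval_mem_adjoin_aeval_esymm [CommRing R] [Algebra R A]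
    {P : MvPolynomial σ R} (hP : P.IsSymmetric) (f : σ → A) :
    aeval f P ∈
      Algebra.adjoin R ((fun k => aeval f (esymm σ R k)) '' Set.Icc 1 (Fintype.card σ)) := by
  obtain ⟨F, hF⟩ := esymmAlgHom_surjective R le_rfl ⟨P, hP⟩
  have hPF : P = aeval (fun i : Fin (Fintype.card σ) => esymm σ R (i + 1)) F := by
    rw [← esymmAlgHom_apply, hF]
  rw [hPF, ← AlgHom.comp_apply, comp_aeval]
  refine Algebra.adjoin_mono ?_ (by rw [← aeval_range]; exact ⟨F, rfl⟩)
  rintro _ ⟨i, rfl⟩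
  exact ⟨i + 1, ⟨Nat.le_add_left 1 i, i.isLt⟩, rfl⟩

theorem aeval_mul_esymm [CommSemiring R] [Algebra R A] (c : A) (f : σ → A) (k : ℕ) :
    aeval (fun i => c * f i) (esymm σ R k) = c ^ k * aeval f (esymm σ R k) := by
  simp_rw [aeval_esymm_eq_multiset_esymm, ← smul_eq_mul, Multiset.pow_smul_esymm,
    Multiset.map_map]
  rfl

end Esymm

end MvPolynomial

/-- Every symmetric, shift-invariant polynomial `P ∈ ℚ[x_1,...,x_n]`
is a polynomial in `z_2,...,z_n`, where `z_k` is the `k`-th elementary symmetric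
polynomial in the `y_i = n·x_i − Σ_j x_j`. -/
theorem symmetric_shift_invariant_mem_adjoin_z (n : ℕ) (hn : 1 ≤ n)
    (y : Fin n → MvPolynomial (Fin n) ℚ)
    (hy : ∀ i, y i = (n : MvPolynomial (Fin n) ℚ) * X i - ∑ j, X j)
    (z : ℕ → MvPolynomial (Fin n) ℚ)
    (hz : ∀ k, z k = ∑ s ∈ Finset.powersetCard k (Finset.univ : Finset (Fin n)),
      ∏ i ∈ s, y i)
    (P : MvPolynomial (Fin n) ℚ)
    (hsym : P.IsSymmetric)
    (hshift : ∀ d : ℚ, aeval (fun j : Fin n => X j + C d) P = P) :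
    P ∈ Algebra.adjoin ℚ {q : MvPolynomial (Fin n) ℚ | ∃ k, 2 ≤ k ∧ k ≤ n ∧ q = z k} := by
  have hz_esymm (k : ℕ) : z k = aeval y (esymm (Fin n) ℚ k) := by
    rw [hz, aeval_esymm_eq_multiset_esymm, Finset.esymm_map_val]
  have hz_one : z 1 = 0 := by
    simp [hz_esymm, esymm_one, hy, Finset.sum_sub_distrib, ← Finset.mul_sum]
  have hmean : (fun j => C (n : ℚ)⁻¹ * y j) = fun j => X j + C (n : ℚ)⁻¹ * -∑ i, X i := by
    funext j
    have hn0 : (n : ℚ) ≠ 0 := Nat.cast_ne_zero.mpr (Nat.one_le_iff_ne_zero.mp hn)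
    rw [hy, ← C_eq_coe_nat, mul_sub, ← mul_assoc, ← C_mul, inv_mul_cancel₀ hn0, C_1, one_mul]
    ring
  have hP : aeval (fun j => C (n : ℚ)⁻¹ * y j) P = P := by
    rw [hmean]
    exact aeval_X_add_eq_self_of_forall_C hshift _
  rw [← hP]
  refine Algebra.adjoin_le ?_ (hsym.aeval_mem_adjoin_aeval_esymm _)
  rintro _ ⟨k, ⟨hk1, hkn⟩, rfl⟩
  rw [Fintype.card_fin] at hkn
  dsimp only
  rw [aeval_mul_esymm, ← hz_esymm, ← map_pow]
  rcases hk1.eq_or_lt with rfl | hk2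
  · simp [hz_one]
  · exact Subalgebra.mul_mem _ (Subalgebra.algebraMap_mem _ _)
      (Algebra.subset_adjoin ⟨k, hk2, hkn, rfl⟩)
end

section
/- Let n ≥ k ≥ 2. In ℚ[x_1,...,x_n], write c_i = e_i(x_1,...,x_n) for the elementary symmetric polynomials and z_i = e_i(y_1,...,y_n) with y_j = n·x_j − Σ_m x_m. Then there exist a polynomial P with rational coefficients and a nonzero rational λ such that z_k = P(c_1, z_2, ..., z_{k−1}) + λ·c_k. -/
/-!
Each `y_j = n x_j - c_1` is an affine function of `x_j`, and expanding the products gives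
`z_m = n^m c_m + ∑_{j<m} binom(n - j, m - j) n^j (-c_1)^(m - j) c_j`.
This system is triangular with nonzero diagonal `n^m` (only `z_1 = 0` is useless, and `c_1` takes
its place), so by induction every `c_j` with `j < k` is a polynomial in `c_1, z_2, …, z_{k-1}`,
and hence so is `z_k - n^k c_k`.
-/

open Finset MvPolynomial

theorem Finset.sum_powersetCard_prod_mul_add {ι R : Type*} [CommSemiring R] (s : Finset ι)
    (f : ι → R) (a b : R) (m : ℕ) :
    ∑ S ∈ powersetCard m s, ∏ i ∈ S, (a * f i + b) =
      ∑ j ∈ range (m + 1), ((#s - j).choose (m - j) : R) * a ^ j * b ^ (m - j) *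
        ∑ T ∈ powersetCard j s, ∏ i ∈ T, f i := by
  classical
  have expand : ∀ S ∈ powersetCard m s, ∏ i ∈ S, (a * f i + b) =
      ∑ j ∈ range (m + 1), ∑ T ∈ powersetCard j S, a ^ j * b ^ (m - j) * ∏ i ∈ T, f i := by
    intro S hS
    rw [prod_add, ← (mem_powersetCard.1 hS).2, sum_powerset]
    refine sum_congr rfl fun j _ => sum_congr rfl fun T hT => ?_
    rw [mem_powersetCard] at hT
    rw [prod_mul_distrib, prod_const, prod_const, card_sdiff_of_subset hT.1, hT.2]
    ring
  rw [sum_congr rfl expand, sum_comm]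
  refine sum_congr rfl fun j hj => ?_
  have swap : ∀ S T, S ∈ powersetCard m s ∧ T ∈ powersetCard j S ↔
      S ∈ (powersetCard m s).filter (T ⊆ ·) ∧ T ∈ powersetCard j s := by
    simp only [mem_powersetCard, mem_filter]
    exact fun S T => ⟨fun ⟨hS, hTS, hT⟩ => ⟨⟨hS, hTS⟩, hTS.trans hS.1, hT⟩,
      fun ⟨⟨hS, hTS⟩, _, hT⟩ => ⟨hS, hTS, hT⟩⟩
  rw [sum_comm' swap, mul_sum]
  refine sum_congr rfl fun T hT => ?_
  rw [mem_powersetCard] at hT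
  rw [sum_const, card_filter_powersetCard_subset T s m hT.1 (by rw [mem_range] at hj; omega), hT.2,
    nsmul_eq_mul]
  ring

theorem Subalgebra.sub_smul_mem_of_triangular {K A : Type*} [Field K] [Ring A] [Algebra K A]
    (B : Subalgebra K A) {c z : ℕ → A} {coeff : ℕ → ℕ → A} {lam : ℕ → K}
    (hz : ∀ m, z m = lam m • c m + ∑ j ∈ range m, coeff m j * c j)
    (hcoeff : ∀ m j, coeff m j ∈ B) (hlam : ∀ m, lam m ≠ 0) {k : ℕ}
    (hcz : ∀ j < k, c j ∈ B ∨ z j ∈ B) : z k - lam k • c k ∈ B := by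
  have lower_mem : ∀ m, (∀ j < m, c j ∈ B) → ∑ j ∈ range m, coeff m j * c j ∈ B :=
    fun m hc => B.sum_mem fun j hj => B.mul_mem (hcoeff m j) (hc j (mem_range.1 hj))
  have hc : ∀ j < k, c j ∈ B := by
    intro j
    induction j using Nat.strong_induction_on with
    | _ j ih =>
      intro hj
      rcases hcz j hj with hcj | hzj
      · exact hcj
      · have solve : c j = (lam j)⁻¹ • (z j - ∑ i ∈ range j, coeff j i * c i) := by
          rw [hz j, add_sub_cancel_right, inv_smul_smul₀ (hlam j)]
        rw [solve]
        exact B.smul_mem (B.sub_mem hzj (lower_mem j fun i hi => ih i hi (hi.trans hj))) _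
  rw [hz k, add_sub_cancel_left]
  exact lower_mem k hc

theorem MvPolynomial.sum_powersetCard_prod_mul_X_sub_sum_X {R : Type*} [CommRing R] (n m : ℕ) :
    ∑ S ∈ powersetCard m (univ : Finset (Fin n)),
        ∏ i ∈ S, ((n : MvPolynomial (Fin n) R) * X i - ∑ j, X j) =
      ((n : R) ^ m) • esymm (Fin n) R m + ∑ j ∈ range m,
        ((n - j).choose (m - j) * (n : MvPolynomial (Fin n) R) ^ j *
          (-esymm (Fin n) R 1) ^ (m - j)) * esymm (Fin n) R j := by
  simp_rw [sub_eq_add_neg, ← esymm_one, sum_powersetCard_prod_mul_add, ← esymm.eq_1,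
    sum_range_succ, card_univ, Fintype.card_fin, Nat.sub_self, Nat.choose_zero_right, pow_zero,
    Nat.cast_one, one_mul, mul_one, add_comm (∑ j ∈ range m, _), Algebra.smul_def, map_pow,
    map_natCast]

/-- Lemma 2.6, polynomial identity: for `n ≥ k ≥ 2`, there exist a
polynomial `P` in `k−1` variables (to be evaluated at `c_1, z_2, ..., z_{k−1}`)
and a nonzero rational `λ` such that `z_k = P(c_1, z_2, ..., z_{k−1}) + λ·c_k`. -/
theorem zk_eq_poly_add_lambda_ck (n k : ℕ) (hk : 2 ≤ k) (hkn : k ≤ n)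
    (y : Fin n → MvPolynomial (Fin n) ℚ)
    (hy : ∀ i, y i = (n : MvPolynomial (Fin n) ℚ) * X i - ∑ j, X j)
    (c z : ℕ → MvPolynomial (Fin n) ℚ)
    (hc : ∀ m, c m = ∑ s ∈ Finset.powersetCard m (Finset.univ : Finset (Fin n)),
      ∏ i ∈ s, X i)
    (hz : ∀ m, z m = ∑ s ∈ Finset.powersetCard m (Finset.univ : Finset (Fin n)),
      ∏ i ∈ s, y i) :
    ∃ (P : MvPolynomial (Fin (k - 1)) ℚ) (lam : ℚ), lam ≠ 0 ∧
      z k = aeval (fun i : Fin (k - 1) =>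
        if (i : ℕ) = 0 then c 1 else z ((i : ℕ) + 1)) P + lam • c k := by
  set f : Fin (k - 1) → MvPolynomial (Fin n) ℚ :=
    fun i => if (i : ℕ) = 0 then c 1 else z ((i : ℕ) + 1)
  have hc_esymm : c = esymm (Fin n) ℚ := funext hc
  have hn : (n : ℚ) ≠ 0 := by exact_mod_cast (show n ≠ 0 by omega)
  have expansion : ∀ m, z m = ((n : ℚ) ^ m) • c m + ∑ j ∈ range m,
      ((n - j).choose (m - j) * (n : MvPolynomial (Fin n) ℚ) ^ j * (-c 1) ^ (m - j)) * c j := by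
    intro m
    simp_rw [hz, hy, hc_esymm]
    exact sum_powersetCard_prod_mul_X_sub_sum_X n m
  set B : Subalgebra ℚ (MvPolynomial (Fin n) ℚ) := (aeval f).range
  have hf_mem : ∀ i, f i ∈ B := fun i => ⟨X i, aeval_X f i⟩
  have hc1 : c 1 ∈ B := hf_mem ⟨0, by omega⟩
  have coeff_mem : ∀ m j,
      ((n - j).choose (m - j) * (n : MvPolynomial (Fin n) ℚ) ^ j * (-c 1) ^ (m - j)) ∈ B :=
    fun m j => B.mul_mem (B.mul_mem (B.natCast_mem _) (B.pow_mem (B.natCast_mem _) _))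
      (B.pow_mem (B.neg_mem hc1) _)
  have generators_mem : ∀ j < k, c j ∈ B ∨ z j ∈ B := by
    intro j hj
    rcases Nat.lt_or_ge j 2 with hj2 | hj2
    · interval_cases j
      · exact .inl (by simp [hc_esymm])
      · exact .inl hc1
    · have hzj := hf_mem ⟨j - 1, by omega⟩
      simp only [f, show j - 1 ≠ 0 by omega, show j - 1 + 1 = j by omega, if_false] at hzj
      exact .inr hzj
  obtain ⟨P, hP⟩ := B.sub_smul_mem_of_triangular expansion coeff_mem
    (fun m => pow_ne_zero m hn) generators_mem
  exact ⟨P, (n : ℚ) ^ k, pow_ne_zero k hn, eq_add_of_sub_eq hP.symm⟩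
end

section
/- Let π: E → B be a fibration (or continuous surjection) with fiber inclusion ι: F → E. Suppose the ℚ-cohomology algebra H*(E) is generated by classes α, β_1,...,β_k; suppose each β_i = π*(θ_i) for some θ_i ∈ H*(B); and suppose H*(F) is a polynomial algebra on ι*(α), with the Leray–Hirsch theorem applying (H*(E) is a free H*(B)-module on the powers of α restricting to a basis of H*(F)). Then H*(B) is generated as a ℚ-algebra by θ_1,...,θ_k. -/
/-!
Let `P ⊆ H*(B)` be the subalgebra generated by the `θ i`. Since `α` and the `π*(θ i)` generate
`H*(E)`, every class of `H*(E)` is a polynomial in `α` with coefficients pulled back from `P`.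
Applied to `π*(s)`, this gives an expansion `π*(s) = ∑ π*(p n) αⁿ` with `p n ∈ P`; by uniqueness of
Leray–Hirsch coefficients it must be the trivial expansion `π*(s) = π*(s) α⁰`, so `s = p 0 ∈ P`.
-/

open Polynomial

namespace Polynomial

theorem eval₂_injective_of_existsUnique_sum {S R : Type*} [CommSemiring S] [CommSemiring R]
    (f : S →+* R) (α : R)
    (hunique : ∀ x : R, ∃! c : ℕ →₀ S, x = c.sum fun n s => f s * α ^ n) :
    Function.Injective fun p : S[X] => p.eval₂ f α := by
  have eval₂_eq_toFinsupp_sum (p : S[X]) :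
      p.eval₂ f α = p.toFinsupp.coeff.sum fun n s => f s * α ^ n := by
    rw [eval₂_eq_sum]
    rfl
  intro p q (hpq : p.eval₂ f α = q.eval₂ f α)
  exact toFinsupp_injective <| AddMonoidAlgebra.coeff_injective <|
    (hunique _).unique (eval₂_eq_toFinsupp_sum p) (hpq.trans (eval₂_eq_toFinsupp_sum q))

variable {K S R : Type*} [CommSemiring K] [CommSemiring S] [CommSemiring R]
  [Algebra K S] [Algebra K R]

theorem adjoin_insert_image_le_range_eval₂AlgHom (f : S →ₐ[K] R) (P : Subalgebra K S) (α : R) :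
    Algebra.adjoin K (insert α (f '' P)) ≤
      (eval₂AlgHom (f.comp P.val) α fun _ => Commute.all _ _).range := by
  refine Algebra.adjoin_le ?_
  rintro _ (rfl | ⟨s, hs, rfl⟩)
  · exact ⟨X, eval₂_X _ _⟩
  · exact ⟨C ⟨s, hs⟩, eval₂_C _ _⟩

theorem eq_top_of_adjoin_insert_image_eq_top (f : S →ₐ[K] R) (P : Subalgebra K S) (α : R)
    (hinj : Function.Injective fun p : S[X] => p.eval₂ (f : S →+* R) α)
    (hgen : Algebra.adjoin K (insert α (f '' P)) = ⊤) :
    P = ⊤ := by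
  refine eq_top_iff.mpr fun s _ => ?_
  obtain ⟨q, hq⟩ :=
    adjoin_insert_image_le_range_eval₂AlgHom f P α (hgen ▸ Algebra.mem_top (x := f s))
  have hq_eq_C : q.map P.val = C s := hinj <| by
    simpa [eval₂_map, AlgHom.comp_toRingHom] using hq
  have hcoeff : (q.coeff 0 : S) = s := by
    simpa using congrArg (coeff · 0) hq_eq_C
  exact hcoeff ▸ (q.coeff 0).2

end Polynomial

/-- abstract Leray–Hirsch lemma, as used in the proof of Theorem 1.4:
let `f : S → R` play the role of `π^* : H^*(B;ℚ) → H^*(E;ℚ)` for a fibration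
`π : E → B` with fibre `F`.  Suppose `H^*(E) = R` is generated as a `ℚ`-algebra by
a class `α` together with classes `β i`, each `β i` is pulled back from a class
`θ i` in `H^*(B) = S`, and the Leray–Hirsch conclusion holds: `R` is a free
`S`-module on the powers `1, α, α², ...` (these powers restricting to a basis of
the polynomial algebra `H^*(F)` on the restriction of `α`).  Then `H^*(B) = S` is
generated as a `ℚ`-algebra by the `θ i`. -/
theorem base_generated_of_leray_hirsch
    (S R : Type*) [CommRing S] [CommRing R] [Algebra ℚ S] [Algebra ℚ R]
    (f : S →ₐ[ℚ] R)
    (ι : Type*) (θ : ι → S) (β : ι → R) (α : R)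
    (hβ : ∀ i, β i = f (θ i))
    (hgen : Algebra.adjoin ℚ (insert α (Set.range β)) = ⊤)
    (hLH : ∀ x : R, ∃! c : ℕ →₀ S, x = c.sum fun n s => f s * α ^ n) :
    Algebra.adjoin ℚ (Set.range θ) = ⊤ := by
  have hβ_mem : Set.range β ⊆ f '' Algebra.adjoin ℚ (Set.range θ) := by
    rintro _ ⟨i, rfl⟩
    exact ⟨θ i, Algebra.subset_adjoin ⟨i, rfl⟩, (hβ i).symm⟩
  refine eq_top_of_adjoin_insert_image_eq_top f _ α
    (eval₂_injective_of_existsUnique_sum (f : S →+* R) α hLH) ?_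
  exact top_le_iff.mp <| hgen ▸ Algebra.adjoin_mono (Set.insert_subset_insert hβ_mem)
end

section
/- Let R be a graded-commutative ℚ-algebra that is a free module over a graded subalgebra A with basis {1, u, u², u³, ...} for some u ∈ R (each element of R has a unique expression Σ a_i u^i with a_i ∈ A, a_i = 0 for all but finitely many i). If R is generated as a ℚ-algebra by u together with a set S ⊆ A, then A is generated as a ℚ-algebra by S. -/
/-!
Write `P = ℚ[S] ⊆ A`. Since `R = P[u]`, every `a ∈ A` is `p(u)` for a polynomial `p` over `P`.
Uniqueness of the expansion in powers of `u` says that `u` is transcendental over `A`, so comparing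
`p(u)` with the constant polynomial `a` gives `a = p(0) ∈ P`.
-/

open Polynomial

section

variable {K R : Type*} [CommRing K] [CommRing R] [Algebra K R]

theorem Subalgebra.transcendental_of_injective_sum_mul_pow {A : Subalgebra K R} {u : R}
    (hinj : Function.Injective fun c : ℕ →₀ A => c.sum fun n a => (a : R) * u ^ n) :
    Transcendental A u := by
  refine transcendental_iff_injective.2 ?_
  rintro ⟨⟨p⟩⟩ ⟨⟨q⟩⟩ hpq
  have : p = q := hinj <| by
    simpa only [Finsupp.sum, aeval_def, eval₂_eq_sum, algebraMap_apply, sum_def,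
      support_ofFinsupp, coeff_ofFinsupp] using hpq
  rw [this]

theorem Transcendental.coeff_zero_eq_of_aeval_mem {A : Subalgebra K R} {u : R}
    (hu : Transcendental A u) {q : A[X]} (hq : Polynomial.aeval u q ∈ A) :
    (q.coeff 0 : R) = Polynomial.aeval u q := by
  have hC : q = C ⟨_, hq⟩ := transcendental_iff_injective.1 hu (by rw [aeval_C]; rfl)
  nth_rw 1 [hC]
  rw [coeff_C_zero]

theorem Transcendental.coeff_zero_eq_of_aeval_mem_of_le {A P : Subalgebra K R} {u : R}
    (hu : Transcendental A u) (hPA : P ≤ A) {p : P[X]} (hp : Polynomial.aeval u p ∈ A) :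
    (p.coeff 0 : R) = Polynomial.aeval u p := by
  have hmap : Polynomial.aeval u (p.map (Subalgebra.inclusion hPA).toRingHom) =
      Polynomial.aeval u p := by
    rw [aeval_def, aeval_def, eval₂_map]
    rfl
  have h := hu.coeff_zero_eq_of_aeval_mem (hmap ▸ hp)
  rwa [hmap, coeff_map] at h

theorem Algebra.aeval_surjective_of_adjoin_insert_eq_top {u : R} {S : Set R}
    (hgen : Algebra.adjoin K (insert u S) = ⊤) :
    Function.Surjective (aeval u : (Algebra.adjoin K S)[X] →ₐ[Algebra.adjoin K S] R) := by
  intro x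
  have hx : x ∈ (Algebra.adjoin (Algebra.adjoin K S) {u}).restrictScalars K := by
    rw [← Algebra.adjoin_union_eq_adjoin_adjoin, Set.union_singleton, hgen]
    trivial
  rwa [Subalgebra.mem_restrictScalars, Algebra.adjoin_singleton_eq_range_aeval] at hx

end

/-- let `R` be a commutative `ℚ`-algebra which is a free module over
a subalgebra `A` with basis the powers `1, u, u², ...` of an element `u ∈ R`
(every element of `R` is uniquely `Σ aᵢ uⁱ` with `aᵢ ∈ A`, almost all zero).
If `R` is generated as a `ℚ`-algebra by `u` together with a set `S ⊆ A`, then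
`A` is generated as a `ℚ`-algebra by `S`. -/
theorem subalgebra_generated_of_free_on_powers
    (R : Type*) [CommRing R] [Algebra ℚ R]
    (A : Subalgebra ℚ R) (u : R)
    (hfree : ∀ x : R, ∃! c : ℕ →₀ A, x = c.sum fun n a => (a : R) * u ^ n)
    (S : Set R) (hS : S ⊆ (A : Set R))
    (hgen : Algebra.adjoin ℚ (insert u S) = ⊤) :
    (A : Set R) ⊆ ↑(Algebra.adjoin ℚ S) := by
  intro a ha
  have hu : Transcendental A u :=
    Subalgebra.transcendental_of_injective_sum_mul_pow fun c c' h => (hfree _).unique rfl h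
  obtain ⟨p, rfl⟩ := Algebra.aeval_surjective_of_adjoin_insert_eq_top hgen a
  rw [← hu.coeff_zero_eq_of_aeval_mem_of_le (Algebra.adjoin_le hS) ha]
  exact (p.coeff 0).2
end
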